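/- Let β₁, β₂ ∈ Δ₇⁺ (the 27-element stratum of E₈ positive roots with β⁷ = 1, β⁸ = 0) with ⟨β₁,β₂⟩ = 0. Then α₈ + β₁ + β₂ is a root of E₈. -/
import Mathlib


/-- The Cartan matrix of `E₈` (node 2 attached to node 4, chain
1–3–4–5–6–7–8). -/
def cartanE8 : Matrix (Fin 8) (Fin 8) ℤ :=
  !![ 2,  0, -1,  0,  0,  0,  0,  0;
      0,  2,  0, -1,  0,  0,  0,  0;
     -1,  0,  2, -1,  0,  0,  0,  0;
      0, -1, -1,  2, -1,  0,  0,  0;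
      0,  0,  0, -1,  2, -1,  0,  0;
      0,  0,  0,  0, -1,  2, -1,  0;
      0,  0,  0,  0,  0, -1,  2, -1;
      0,  0,  0,  0,  0,  0, -1,  2]

/-- The inner product on the `E₈` root lattice (simple-root coordinates). -/
def innE8 (x y : Fin 8 → ℤ) : ℤ := ∑ i, ∑ j, x i * cartanE8 i j * y j

/-- The stratum `Δ₇⁺` of positive `E₈` roots `β` with `β⁷ = 1` and `β⁸ = 0`
in simple-root coordinates (27 elements). -/
def Δ7posE8 : Set (Fin 8 → ℤ) :=
  {β | innE8 β β = 2 ∧ (∀ i, 0 ≤ β i) ∧ β 6 = 1 ∧ β 7 = 0}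

/-- The eighth simple root `α₈` of `E₈`. -/
def α8 : Fin 8 → ℤ := fun i => if i = 7 then 1 else 0

open Matrix in
lemma my_cons_val_five {α : Type*} {m : ℕ} (x : α) (u : Fin (m+5) → α) :
    vecCons x u 5 = vecHead (vecTail (vecTail (vecTail (vecTail u)))) := rfl
open Matrix in
lemma my_cons_val_six {α : Type*} {m : ℕ} (x : α) (u : Fin (m+6) → α) :
    vecCons x u 6 = vecHead (vecTail (vecTail (vecTail (vecTail (vecTail u))))) := rfl
open Matrix in
lemma my_cons_val_seven {α : Type*} {m : ℕ} (x : α) (u : Fin (m+7) → α) :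
    vecCons x u 7 = vecHead (vecTail (vecTail (vecTail (vecTail (vecTail (vecTail u)))))) := rfl

set_option maxRecDepth 8000 in
set_option maxHeartbeats 2000000 in
lemma innE8_eq (x y : Fin 8 → ℤ) : innE8 x y =
    2*x 0*y 0 - x 0*y 2 + 2*x 1*y 1 - x 1*y 3
    - x 2*y 0 + 2*x 2*y 2 - x 2*y 3
    - x 3*y 1 - x 3*y 2 + 2*x 3*y 3 - x 3*y 4
    - x 4*y 3 + 2*x 4*y 4 - x 4*y 5
    - x 5*y 4 + 2*x 5*y 5 - x 5*y 6
    - x 6*y 5 + 2*x 6*y 6 - x 6*y 7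
    - x 7*y 6 + 2*x 7*y 7 := by
  simp [innE8, cartanE8, Fin.sum_univ_eight, my_cons_val_five, my_cons_val_six, my_cons_val_seven, Matrix.vecHead, Matrix.vecTail, Function.comp]
  ring


/-- If `β₁, β₂ ∈ Δ₇⁺` are orthogonal, then
`α₈ + β₁ + β₂` is a root of `E₈` (i.e. a lattice vector of squared
length `2`). -/
theorem stmt_18 (β₁ β₂ : Fin 8 → ℤ) (h₁ : β₁ ∈ Δ7posE8) (h₂ : β₂ ∈ Δ7posE8)
    (horth : innE8 β₁ β₂ = 0) :
    innE8 (α8 + β₁ + β₂) (α8 + β₁ + β₂) = 2 := by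
  obtain ⟨e₁, -, f₁, g₁⟩ := h₁
  obtain ⟨e₂, -, f₂, g₂⟩ := h₂
  rw [innE8_eq] at e₁ e₂ horth
  rw [innE8_eq]
  have d0 : ((0:Fin 8) = 7) = False := by decide
  have d1 : ((1:Fin 8) = 7) = False := by decide
  have d2 : ((2:Fin 8) = 7) = False := by decide
  have d3 : ((3:Fin 8) = 7) = False := by decide
  have d4 : ((4:Fin 8) = 7) = False := by decide
  have d5 : ((5:Fin 8) = 7) = False := by decide
  have d6 : ((6:Fin 8) = 7) = False := by decide
  have d7 : ((7:Fin 8) = 7) = True := by decide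
  simp only [Pi.add_apply, α8, d0, d1, d2, d3, d4, d5, d6, d7, if_true, if_false, f₁, g₁, f₂, g₂]
  linear_combination e₁ + e₂ + 2 * horth +
    (2*β₁ 5 + 2*β₂ 5 + 2*β₁ 7 - 4*β₂ 6 + 2*β₂ 7 - 2*β₁ 6 - 2) * f₁ +
    (2 + 2*β₂ 6 - 4*β₂ 7 - 2*β₁ 7) * g₁ +
    (2*β₁ 5 + 2*β₂ 5 + 2*β₂ 7 - 2*β₂ 6 - 6) * f₂ +
    (4 - 2*β₂ 7) * g₂
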